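/- arXiv:1909.01943 — 7 statements merged into one kernel-verified Lean document; each statement's English description precedes it below -/
import Mathlib

section
/- With η_k, ζ_k as above and 0 < λ < 1, define for j ≠ k the slope g_{kj}(λ) = (ζ_k(λ) − ζ_j(λ))/(η_k(λ) − η_j(λ)) and g_k(λ) = g_{k,k+1}(λ). Then g_k(λ) = λ(1 + (N−k)ν)/(ν(Nλ + kν)) with ν = 1 − λ, and g_k(λ) − g_{k+1}(λ) = (N+1)λ/((Nλ+(k+1)ν)(Nλ+kν)) > 0; in particular g_k(λ) is strictly decreasing in k over the nonnegative integers. -/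
/-- `η_k(λ) = ((N+1-k)λ^k + kλ^(k-1))/(N+1)` with the convention `λ^0 = 1`. -/
noncomputable def eta (N : ℕ) (lam : ℝ) (k : ℕ) : ℝ :=
  (((N : ℝ) + 1 - k) * lam ^ k + k * lam ^ (k - 1)) / ((N : ℝ) + 1)

/-- `ζ_k(λ) = (N+1-k)λ^k/(N+1)` with the convention `λ^0 = 1`. -/
noncomputable def zeta (N : ℕ) (lam : ℝ) (k : ℕ) : ℝ :=
  (((N : ℝ) + 1 - k) * lam ^ k) / ((N : ℝ) + 1)

/-- The slope `g_k(λ) = (ζ_k(λ) - ζ_{k+1}(λ))/(η_k(λ) - η_{k+1}(λ))`. -/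
noncomputable def gslope (N : ℕ) (lam : ℝ) (k : ℕ) : ℝ :=
  (zeta N lam k - zeta N lam (k + 1)) / (eta N lam k - eta N lam (k + 1))

/-- Explicit formula for `g_k(λ)`, the formula for the difference of consecutive slopes,
its positivity, and strict monotonicity of `g_k(λ)` in `k`. -/
theorem stmt4 (N : ℕ) (hN : 1 ≤ N) (lam : ℝ) (h0 : 0 < lam) (h1 : lam < 1) :
    (∀ k : ℕ,
      gslope N lam k
        = lam * (1 + ((N : ℝ) - k) * (1 - lam)) / ((1 - lam) * (N * lam + k * (1 - lam))) ∧
      gslope N lam k - gslope N lam (k + 1)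
        = ((N : ℝ) + 1) * lam /
            ((N * lam + (k + 1) * (1 - lam)) * (N * lam + k * (1 - lam))) ∧
      0 < gslope N lam k - gslope N lam (k + 1)) ∧
    StrictAnti (gslope N lam) := by
  have hnu : (0:ℝ) < 1 - lam := by linarith
  have hN1 : (0:ℝ) < (N:ℝ) + 1 := by positivity
  have hNr : (1:ℝ) ≤ (N:ℝ) := by exact_mod_cast hN
  have hNl : (0:ℝ) < (N:ℝ) * lam := by nlinarith
  have hden : ∀ k : ℕ, (0:ℝ) < (N:ℝ) * lam + k * (1 - lam) := by
    intro k
    have hk : (0:ℝ) ≤ (k:ℝ) := Nat.cast_nonneg k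
    nlinarith
  have key : ∀ k : ℕ, gslope N lam k
      = lam * (1 + ((N : ℝ) - k) * (1 - lam)) / ((1 - lam) * (N * lam + k * (1 - lam))) := by
    intro k
    have hdk := hden k
    cases k with
    | zero =>
      have hd : eta N lam 0 - eta N lam 1 = (N:ℝ) * (1 - lam) / ((N:ℝ)+1) := by
        simp [eta]
        field_simp
        ring
      have hz : zeta N lam 0 - zeta N lam 1 = (1 + (N:ℝ) * (1 - lam)) / ((N:ℝ)+1) := by
        simp [zeta]
        field_simp
        ring
      rw [gslope, hd, hz, div_eq_div_iff (by positivity) (by push_cast; nlinarith)]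
      push_cast
      field_simp
      ring
    | succ m =>
      have hlm : (0:ℝ) < lam ^ m := by positivity
      have hd : eta N lam (m+1) - eta N lam (m+1+1)
          = lam ^ m * ((1 - lam) * ((N:ℝ) * lam + (m+1) * (1 - lam))) / ((N:ℝ)+1) := by
        simp only [eta, Nat.add_sub_cancel]
        push_cast
        field_simp
        ring
      have hz : zeta N lam (m+1) - zeta N lam (m+1+1)
          = lam ^ (m+1) * (1 + ((N:ℝ) - (m+1)) * (1 - lam)) / ((N:ℝ)+1) := by
        simp only [zeta]
        push_cast
        field_simp
        ring
      have hdk' : (0:ℝ) < (N:ℝ) * lam + ((m:ℝ)+1) * (1 - lam) := by push_cast at hdk; exact hdk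
      rw [gslope, hd, hz, div_eq_div_iff (by positivity) (by push_cast; positivity)]
      push_cast
      ring
  have diff : ∀ k : ℕ, gslope N lam k - gslope N lam (k + 1)
      = ((N : ℝ) + 1) * lam /
          ((N * lam + (k + 1) * (1 - lam)) * (N * lam + k * (1 - lam))) := by
    intro k
    have h1k := hden k
    have h2k := hden (k+1)
    push_cast at h2k
    rw [key k, key (k+1)]
    push_cast
    rw [div_sub_div _ _ (by positivity) (by positivity),
        div_eq_div_iff (by positivity) (by positivity)]
    ring
  have pos : ∀ k : ℕ, 0 < gslope N lam k - gslope N lam (k + 1) := by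
    intro k
    rw [diff k]
    have h1k := hden k
    have h2k := hden (k+1)
    push_cast at h2k
    have : (0:ℝ) < ((N:ℝ)+1) * lam := by positivity
    positivity
  refine ⟨fun k => ⟨key k, diff k, pos k⟩, strictAnti_nat_of_succ_lt fun n => by
    have := pos n; linarith⟩
end

section
/- Let N ≥ 1 be an integer, 0 ≤ λ < 1, ν = 1 − λ, and k ∈ {1, 2, …, N+1}. Then 1/(1 − λ^N) ≤ (1 − ζ_k(λ))/(1 − η_k(λ)) ≤ (1 + Nν)/(Nν). The first inequality is an equality iff k = N+1, or k ≥ 2 and λ = 0; the second is an equality iff k = 1. -/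
private lemma geom_aux (lam : ℝ) (n : ℕ) :
    (1 - lam) * (∑ i ∈ Finset.range n, lam ^ i) = 1 - lam ^ n := by
  linear_combination -(geom_sum_mul lam n)

private lemma sum_lb (lam : ℝ) (h0 : 0 ≤ lam) (h1 : lam < 1) (n : ℕ) :
    (n : ℝ) * lam ^ (n - 1) ≤ ∑ i ∈ Finset.range n, lam ^ i := by
  calc (n : ℝ) * lam ^ (n-1) = ∑ _i ∈ Finset.range n, lam ^ (n-1) := by
        rw [Finset.sum_const, Finset.card_range, nsmul_eq_mul]
    _ ≤ _ := Finset.sum_le_sum fun i hi => pow_le_pow_of_le_one h0 h1.le (by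
        simp only [Finset.mem_range] at hi; omega)

private lemma sum_ub (lam : ℝ) (h0 : 0 ≤ lam) (h1 : lam < 1) (n : ℕ) :
    (∑ i ∈ Finset.range n, lam ^ i) ≤ n := by
  calc (∑ i ∈ Finset.range n, lam ^ i) ≤ ∑ _i ∈ Finset.range n, (1:ℝ) :=
      Finset.sum_le_sum fun i _ => pow_le_one₀ h0 h1.le
    _ = n := by simp

private lemma sum_ge1 (lam : ℝ) (h0 : 0 ≤ lam) {n : ℕ} (hn : 1 ≤ n) :
    1 ≤ ∑ i ∈ Finset.range n, lam ^ i := by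
  have := Finset.single_le_sum (f := fun i => lam ^ i)
    (fun i _ => pow_nonneg h0 i) (Finset.mem_range.mpr (by omega : 0 < n))
  simpa using this

private lemma sum_strict (lam : ℝ) (h0 : 0 ≤ lam) (h1 : lam < 1) {k : ℕ} (hk : 2 ≤ k) :
    (k : ℝ) * lam ^ (k - 1) < ∑ i ∈ Finset.range k, lam ^ i := by
  obtain ⟨j, rfl⟩ : ∃ j, k = j + 1 := ⟨k - 1, by omega⟩
  rw [Finset.sum_range_succ']
  have h2 : (j : ℝ) * lam ^ j ≤ ∑ i ∈ Finset.range j, lam ^ (i + 1) := by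
    calc (j:ℝ) * lam ^ j = ∑ _i ∈ Finset.range j, lam ^ j := by
          rw [Finset.sum_const, Finset.card_range, nsmul_eq_mul]
      _ ≤ _ := Finset.sum_le_sum fun i hi => pow_le_pow_of_le_one h0 h1.le (by
          simp only [Finset.mem_range] at hi; omega)
  have h3 : lam ^ j < 1 := pow_lt_one₀ h0 h1 (by omega)
  have h4 : (j+1 : ℕ) - 1 = j := by omega
  rw [h4]
  push_cast
  nlinarith

set_option maxHeartbeats 2000000 in
/-- Lemma 11 of the paper: bounds on `(1 - ζ_k(λ))/(1 - η_k(λ))` for `1 ≤ k ≤ N+1`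
and `0 ≤ λ < 1`, together with the equality conditions. -/
theorem stmt5 (N : ℕ) (hN : 1 ≤ N) (lam : ℝ) (h0 : 0 ≤ lam) (h1 : lam < 1)
    (k : ℕ) (hk1 : 1 ≤ k) (hk2 : k ≤ N + 1) :
    1 / (1 - lam ^ N) ≤ (1 - zeta N lam k) / (1 - eta N lam k) ∧
    (1 - zeta N lam k) / (1 - eta N lam k) ≤ (1 + N * (1 - lam)) / (N * (1 - lam)) ∧
    (1 / (1 - lam ^ N) = (1 - zeta N lam k) / (1 - eta N lam k)
      ↔ k = N + 1 ∨ (2 ≤ k ∧ lam = 0)) ∧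
    ((1 - zeta N lam k) / (1 - eta N lam k) = (1 + N * (1 - lam)) / (N * (1 - lam))
      ↔ k = 1) := by
  obtain ⟨s, hs⟩ : ∃ s : ℕ → ℝ, s = fun n => ∑ i ∈ Finset.range n, lam ^ i := ⟨_, rfl⟩
  obtain ⟨A, hA⟩ : ∃ A : ℝ, A = (N:ℝ) + 1 - ((N:ℝ) + 1 - k) * lam ^ k := ⟨_, rfl⟩
  obtain ⟨B, hB⟩ : ∃ B : ℝ, B = (k:ℝ) * lam ^ (k-1) := ⟨_, rfl⟩
  have hNpos : (0:ℝ) < N := by exact_mod_cast hN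
  have hnu : (0:ℝ) < 1 - lam := by linarith
  have hDN : (0:ℝ) < 1 - lam ^ N := by
    have := pow_lt_one₀ h0 h1 (by omega : N ≠ 0); linarith
  have hpowk : lam ^ k = lam ^ (k-1) * lam := by
    rw [← pow_succ]; congr 1; omega
  have hgk : (1 - lam) * s k = 1 - lam ^ k := by rw [hs]; exact geom_aux lam k
  have hsklb : (k:ℝ) * lam ^ (k-1) ≤ s k := by rw [hs]; exact sum_lb lam h0 h1 k
  have hskge1 : 1 ≤ s k := by rw [hs]; exact sum_ge1 lam h0 hk1
  have hskub : s k ≤ (k:ℝ) := by rw [hs]; exact sum_ub lam h0 h1 k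
  -- identity I0
  have hAB : A - B = (1 - lam) * (((N:ℝ)+1) * s k - (k:ℝ) * lam ^ (k-1)) := by
    rw [hA, hB]
    linear_combination (-((N:ℝ)+1)) * hgk + (k:ℝ) * hpowk
  -- identity I2
  have hI2 : A - (1 + (N:ℝ)*(1-lam)) * B
      = ((N:ℝ)+1) * ((1-lam) * (s k - (k:ℝ)*lam^(k-1))) := by
    rw [hA, hB]
    linear_combination (-((N:ℝ)+1)) * hgk + (k:ℝ) * hpowk
  have hSpos : 0 < ((N:ℝ)+1) * s k - (k:ℝ) * lam ^ (k-1) := by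
    nlinarith [mul_le_mul_of_nonneg_left hskge1 hNpos.le]
  have hABpos : 0 < A - B := by rw [hAB]; exact mul_pos hnu hSpos
  have hBnn : 0 ≤ B := by
    rw [hB]; exact mul_nonneg (by positivity) (pow_nonneg h0 _)
  have hApos : 0 < A := by linarith
  have hNnu : 0 < (N:ℝ) * (1 - lam) := mul_pos hNpos hnu
  -- quotient rewriting
  have hNe : ((N:ℝ)+1) ≠ 0 := by positivity
  have hZ : 1 - zeta N lam k = A / ((N:ℝ)+1) := by
    rw [zeta, hA]; field_simp
  have hP : 1 - eta N lam k = (A - B) / ((N:ℝ)+1) := by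
    rw [eta, hA, hB]; field_simp; ring
  have hQ : (1 - zeta N lam k) / (1 - eta N lam k) = A / (A - B) := by
    rw [hZ, hP]
    field_simp
  -- lower bound core
  have hlow : A * lam ^ N ≤ B ∧
      (A * lam ^ N = B ↔ k = N + 1 ∨ (2 ≤ k ∧ lam = 0)) := by
    rcases (by omega : k = N + 1 ∨ k ≤ N) with hc | hc
    · subst hc
      have hAe : A = (N:ℝ) + 1 := by rw [hA]; push_cast; ring
      have hBe : B = ((N:ℝ)+1) * lam ^ N := by
        rw [hB]; push_cast [Nat.add_sub_cancel]; ring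
      constructor
      · rw [hAe, hBe]
      · simp [hAe, hBe, mul_comm]
    · -- k ≤ N
      obtain ⟨m, hm⟩ : ∃ m : ℕ, m = N + 1 - k := ⟨_, rfl⟩
      have hm1 : 1 ≤ m := by omega
      have hgm : (1 - lam) * s m = 1 - lam ^ m := by rw [hs]; exact geom_aux lam m
      have hpowN : lam ^ N = lam ^ (k-1) * lam ^ m := by
        rw [← pow_add]; congr 1; omega
      have hmc : ((m:ℕ):ℝ) = (N:ℝ) + 1 - (k:ℝ) := by
        rw [hm]; push_cast [Nat.cast_sub (by omega : k ≤ N + 1)]; ring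
      have hI1 : B - A * lam ^ N
          = lam ^ (k-1) * ((1-lam) * ((k:ℝ) * s m - ((N:ℝ)+1-k) * lam ^ m * s k)) := by
        rw [hA, hB]
        linear_combination (-(k:ℝ)*lam^(k-1)) * hgm
          + (((N:ℝ)+1-k)*lam^(k-1)*lam^m) * hgk
          + (-((N:ℝ)+1) + ((N:ℝ)+1-k)*lam^k) * hpowN
      have hmlam : (m:ℝ) * lam ^ m < s m := by
        rcases eq_or_lt_of_le h0 with hz | hp
        · have : lam ^ m = 0 := by rw [← hz]; exact zero_pow (by omega)
          rw [this]
          have : 1 ≤ s m := by rw [hs]; exact sum_ge1 lam h0 hm1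
          nlinarith
        · have h5 : (m:ℝ) * lam ^ (m-1) ≤ s m := by rw [hs]; exact sum_lb lam h0 h1 m
          have h6 : lam ^ m = lam ^ (m-1) * lam := by rw [← pow_succ]; congr 1; omega
          have h7 : 0 < lam ^ (m-1) := pow_pos hp _
          have h8 : (0:ℝ) < m := by exact_mod_cast hm1
          have h9 : 0 < (m:ℝ) * lam ^ (m-1) := mul_pos h8 h7
          have h10 : (m:ℝ) * lam ^ m < (m:ℝ) * lam ^ (m-1) := by
            rw [h6]
            nlinarith [mul_pos h9 hnu]
          linarith
      have hinner : 0 < (k:ℝ) * s m - ((N:ℝ)+1-k) * lam ^ m * s k := by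
        rw [← hmc]
        have h9 : 0 ≤ (m:ℝ) * lam ^ m :=
          mul_nonneg (by positivity) (pow_nonneg h0 _)
        have h10 : (m:ℝ) * lam ^ m * s k ≤ (m:ℝ) * lam ^ m * k :=
          mul_le_mul_of_nonneg_left hskub h9
        have h11 : (1:ℝ) ≤ k := by exact_mod_cast hk1
        nlinarith
      have hfacpos : 0 < (1-lam) * ((k:ℝ) * s m - ((N:ℝ)+1-k) * lam ^ m * s k) :=
        mul_pos hnu hinner
      have hUnn : 0 ≤ lam ^ (k-1) := pow_nonneg h0 _
      constructor
      · nlinarith [mul_nonneg hUnn hfacpos.le]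
      · constructor
        · intro heq
          have hU0 : lam ^ (k-1) = 0 := by
            by_contra hne
            have : 0 < lam ^ (k-1) := lt_of_le_of_ne hUnn (Ne.symm hne)
            nlinarith [mul_pos this hfacpos]
          have hkn1 : k ≠ 1 := by
            intro hke
            rw [hke] at hU0
            norm_num at hU0
          have hl0 : lam = 0 := by
            have := pow_eq_zero_iff (n := k - 1) (by omega) |>.mp hU0
            exact this
          exact Or.inr ⟨by omega, hl0⟩
        · rintro (h | ⟨hk2', hlam0⟩)
          · omega
          · have hU0 : lam ^ (k-1) = 0 := by
              rw [hlam0]; exact zero_pow (by omega)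
            have hN0 : lam ^ N = 0 := by
              rw [hlam0]; exact zero_pow (by omega)
            rw [hN0, hB, hU0]; ring
  -- upper bound core
  have hup : (1 + (N:ℝ)*(1-lam)) * B ≤ A ∧
      ((1 + (N:ℝ)*(1-lam)) * B = A ↔ k = 1) := by
    constructor
    · nlinarith [mul_nonneg (mul_nonneg (by positivity : (0:ℝ) ≤ (N:ℝ)+1) hnu.le)
        (by linarith : (0:ℝ) ≤ s k - (k:ℝ)*lam^(k-1))]
    · constructor
      · intro heq
        by_contra hne
        have hk2' : 2 ≤ k := by omega
        have : (k:ℝ) * lam ^ (k-1) < s k := by rw [hs]; exact sum_strict lam h0 h1 hk2'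
        nlinarith [mul_pos (mul_pos (by positivity : (0:ℝ) < (N:ℝ)+1) hnu)
          (by linarith : (0:ℝ) < s k - (k:ℝ)*lam^(k-1))]
      · intro hke
        subst hke
        rw [hA, hB]
        norm_num
        ring
  -- assemble
  rw [hQ]
  refine ⟨?_, ?_, ?_, ?_⟩
  · rw [div_le_div_iff₀ hDN hABpos]
    nlinarith [hlow.1]
  · rw [div_le_div_iff₀ hABpos hNnu]
    nlinarith [hup.1]
  · rw [div_eq_div_iff hDN.ne' hABpos.ne']
    rw [← hlow.2]
    constructor <;> intro h <;> linear_combination h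
  · rw [div_eq_div_iff hABpos.ne' hNnu.ne']
    rw [← hup.2]
    constructor <;> intro h <;> linear_combination h
end

section
/- Fix an integer N ≥ 1, 0 < λ < 1, ν = 1 − λ, and 0 < δ ≤ 1. Define ζ(N, δ, λ, k) = λ(δ(1 + (N−k)ν) − λ^k)/(ν(kν + Nλ)) for nonnegative integers k. Then the maximum of ζ(N, δ, λ, k) over all nonnegative integers k is attained at k = k_*, where k_* is the largest integer k with (N+1−k)λ^k + kλ^{k−1} ≥ (N+1)δ. -/
/-- `ζ(N, δ, λ, k) = λ(δ(1 + (N-k)ν) - λ^k)/(ν(kν + Nλ))` with `ν = 1 - λ`. -/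
noncomputable def zetadel (N : ℕ) (δ lam : ℝ) (k : ℕ) : ℝ :=
  lam * (δ * (1 + ((N : ℝ) - k) * (1 - lam)) - lam ^ k) /
    ((1 - lam) * (k * (1 - lam) + N * lam))

lemma zeta_denom_pos (N : ℕ) (hN : 1 ≤ N) (lam : ℝ) (h0 : 0 < lam) (h1 : lam < 1) (k : ℕ) :
    0 < (1 - lam) * ((k : ℝ) * (1 - lam) + N * lam) := by
  have h2 : (0:ℝ) < 1 - lam := by linarith
  have h3 : (1:ℝ) ≤ N := by exact_mod_cast hN
  have h4 : (0:ℝ) ≤ (k : ℝ) := Nat.cast_nonneg k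
  have : (0:ℝ) < (k : ℝ) * (1 - lam) + N * lam := by nlinarith
  positivity

lemma zeta_step_up (N : ℕ) (hN : 1 ≤ N) (lam δ : ℝ) (h0 : 0 < lam) (h1 : lam < 1) (k : ℕ)
    (h : ((N : ℝ) - k) * lam ^ (k+1) + ((k:ℝ)+1) * lam ^ k ≥ ((N : ℝ) + 1) * δ) :
    zetadel N δ lam k ≤ zetadel N δ lam (k+1) := by
  unfold zetadel
  rw [div_le_div_iff₀ (zeta_denom_pos N hN lam h0 h1 k) (zeta_denom_pos N hN lam h0 h1 (k+1))]
  push_cast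
  have hc : (0:ℝ) < lam * (1 - lam)^2 := by
    have : (0:ℝ) < 1 - lam := by linarith
    positivity
  have key : lam * (δ * (1 + ((N:ℝ) - ((k:ℝ)+1)) * (1 - lam)) - lam ^ (k+1)) *
        ((1 - lam) * ((k:ℝ) * (1 - lam) + (N:ℝ) * lam)) -
      lam * (δ * (1 + ((N:ℝ) - (k:ℝ)) * (1 - lam)) - lam ^ k) *
        ((1 - lam) * (((k:ℝ)+1) * (1 - lam) + (N:ℝ) * lam)) =
      lam * (1 - lam)^2 *
        (((N:ℝ) - k) * lam ^ (k+1) + ((k:ℝ)+1) * lam ^ k - ((N:ℝ)+1) * δ) := by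
    ring
  nlinarith [mul_nonneg hc.le (sub_nonneg.2 h)]

lemma zeta_step_down (N : ℕ) (hN : 1 ≤ N) (lam δ : ℝ) (h0 : 0 < lam) (h1 : lam < 1) (k : ℕ)
    (h : ((N : ℝ) - k) * lam ^ (k+1) + ((k:ℝ)+1) * lam ^ k ≤ ((N : ℝ) + 1) * δ) :
    zetadel N δ lam (k+1) ≤ zetadel N δ lam k := by
  unfold zetadel
  rw [div_le_div_iff₀ (zeta_denom_pos N hN lam h0 h1 (k+1)) (zeta_denom_pos N hN lam h0 h1 k)]
  push_cast
  have hc : (0:ℝ) < lam * (1 - lam)^2 := by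
    have : (0:ℝ) < 1 - lam := by linarith
    positivity
  have key : lam * (δ * (1 + ((N:ℝ) - ((k:ℝ)+1)) * (1 - lam)) - lam ^ (k+1)) *
        ((1 - lam) * ((k:ℝ) * (1 - lam) + (N:ℝ) * lam)) -
      lam * (δ * (1 + ((N:ℝ) - (k:ℝ)) * (1 - lam)) - lam ^ k) *
        ((1 - lam) * (((k:ℝ)+1) * (1 - lam) + (N:ℝ) * lam)) =
      lam * (1 - lam)^2 *
        (((N:ℝ) - k) * lam ^ (k+1) + ((k:ℝ)+1) * lam ^ k - ((N:ℝ)+1) * δ) := by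
    ring
  nlinarith [mul_nonneg hc.le (sub_nonneg.2 h)]

/-- `η` is antitone in `k`. -/
lemma eta_anti (N : ℕ) (lam : ℝ) (h0 : 0 < lam) (h1 : lam < 1) :
    Antitone (fun k : ℕ => ((N : ℝ) + 1 - k) * lam ^ k + k * lam ^ (k - 1)) := by
  refine antitone_nat_of_succ_le fun k => ?_
  rcases k with _ | j
  · simp only [Nat.cast_zero, pow_zero, Nat.cast_one, Nat.zero_sub]
    push_cast
    nlinarith [Nat.cast_nonneg (α := ℝ) N]
  · have e0 : (j + 1 + 1) - 1 = j + 1 := rfl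
    have e0' : (j + 1) - 1 = j := rfl
    rw [e0, e0']
    push_cast
    have hp : (0:ℝ) < lam ^ j := pow_pos h0 j
    have hj : (0:ℝ) ≤ (j:ℝ) := Nat.cast_nonneg j
    have hN' : (0:ℝ) ≤ (N:ℝ) := Nat.cast_nonneg N
    have e1 : lam ^ (j+1) = lam * lam ^ j := by rw [pow_succ]; ring
    have e2 : lam ^ (j+1+1) = lam * lam * lam ^ j := by rw [pow_succ, pow_succ]; ring
    rw [e1, e2]
    nlinarith [mul_nonneg (mul_nonneg hp.le h0.le) (show (0:ℝ) ≤ 1 - lam by linarith),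
      mul_nonneg hp.le (show (0:ℝ) ≤ (1 - lam)*(1-lam) by nlinarith)]

/-- Eq. (61) of the paper: the maximum of `ζ(N, δ, λ, k)` over nonnegative integers `k`
is attained at `k_*`, the largest integer with `(N+1-k)λ^k + kλ^(k-1) ≥ (N+1)δ`. -/
theorem stmt7 (N : ℕ) (hN : 1 ≤ N) (lam δ : ℝ) (h0 : 0 < lam) (h1 : lam < 1)
    (hδ0 : 0 < δ) (hδ1 : δ ≤ 1) (kstar : ℕ)
    (hk1 : ((N : ℝ) + 1 - kstar) * lam ^ kstar + kstar * lam ^ (kstar - 1)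
      ≥ ((N : ℝ) + 1) * δ)
    (hk2 : ∀ k : ℕ, ((N : ℝ) + 1 - k) * lam ^ k + k * lam ^ (k - 1)
      ≥ ((N : ℝ) + 1) * δ → k ≤ kstar) :
    ∀ k : ℕ, zetadel N δ lam k ≤ zetadel N δ lam kstar := by
  have hup : ∀ j : ℕ, j + 1 ≤ kstar → zetadel N δ lam j ≤ zetadel N δ lam (j+1) := by
    intro j hj
    apply zeta_step_up N hN lam δ h0 h1
    have hmono := eta_anti N lam h0 h1 hj
    simp only at hmono
    have h2 : ((N : ℝ) + 1 - ((j:ℕ)+1 : ℕ)) * lam ^ (j+1) + (((j:ℕ)+1 : ℕ):ℝ) * lam ^ ((j+1) - 1)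
        ≥ ((N : ℝ) + 1) * δ := le_trans hk1 hmono
    have e : (j+1) - 1 = j := rfl
    rw [e] at h2
    push_cast at h2 ⊢
    linarith
  have hdown : ∀ j : ℕ, kstar ≤ j → zetadel N δ lam (j+1) ≤ zetadel N δ lam j := by
    intro j hj
    apply zeta_step_down N hN lam δ h0 h1
    by_contra hcon
    push_neg at hcon
    have hle : j + 1 ≤ kstar := by
      apply hk2
      have e : (j+1) - 1 = j := rfl
      rw [e]
      push_cast
      push_cast at hcon
      linarith
    omega
  intro k
  have hbelow : ∀ d : ℕ, zetadel N δ lam (kstar - d) ≤ zetadel N δ lam kstar := by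
    intro d
    induction d with
    | zero => simp
    | succ d ih =>
      rcases le_or_gt kstar d with h | h
      · have e : kstar - (d+1) = kstar - d := by omega
        rw [e]; exact ih
      · have e : kstar - (d+1) + 1 = kstar - d := by omega
        have hx := hup (kstar - (d+1)) (by omega)
        rw [e] at hx
        exact le_trans hx ih
  have habove : ∀ d : ℕ, zetadel N δ lam (kstar + d) ≤ zetadel N δ lam kstar := by
    intro d
    induction d with
    | zero => simp
    | succ d ih =>
      have hx := hdown (kstar + d) (by omega)
      have e : kstar + (d+1) = kstar + d + 1 := by omega
      rw [e]
      exact le_trans hx ih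
  rcases le_or_gt k kstar with hk | hk
  · have e : k = kstar - (kstar - k) := by omega
    rw [e]; exact hbelow _
  · have e : k = kstar + (k - kstar) := by omega
    rw [e]; exact habove _
end

section
/- Fix an integer N ≥ 1, 0 < λ < 1, ν = 1 − λ, and let k_* be the largest integer k with (N+1−k)λ^k + kλ^{k−1} ≥ (N+1)δ. If 0 < δ ≤ λ^N then ζ(N, δ, λ, k_*) ≤ 0, and if λ^N < δ ≤ 1 then ζ(N, δ, λ, k_*) > 0, where ζ(N, δ, λ, k) = λ(δ(1 + (N−k)ν) − λ^k)/(ν(kν + Nλ)). -/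
set_option maxHeartbeats 1000000

/-- Eqs. (64)-(65) of the paper: the sign of `ζ(N, δ, λ, k_*)` is determined by
comparing `δ` with `λ^N`. -/
theorem stmt8 (N : ℕ) (hN : 1 ≤ N) (lam δ : ℝ) (h0 : 0 < lam) (h1 : lam < 1)
    (hδ0 : 0 < δ) (hδ1 : δ ≤ 1) (kstar : ℕ)
    (hk1 : ((N : ℝ) + 1 - kstar) * lam ^ kstar + kstar * lam ^ (kstar - 1)
      ≥ ((N : ℝ) + 1) * δ)
    (hk2 : ∀ k : ℕ, ((N : ℝ) + 1 - k) * lam ^ k + k * lam ^ (k - 1)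
      ≥ ((N : ℝ) + 1) * δ → k ≤ kstar) :
    (δ ≤ lam ^ N → zetadel N δ lam kstar ≤ 0) ∧
    (lam ^ N < δ → 0 < zetadel N δ lam kstar) := by
  have hν0 : 0 < 1 - lam := by linarith
  -- Bernoulli-type lemmas
  have L1 : ∀ m : ℕ, lam ^ m * (1 + m * (1 - lam)) ≤ 1 := by
    intro m
    have hb : 1 + (m:ℝ) * (1 - lam) ≤ (1 + (1 - lam)) ^ m :=
      one_add_mul_le_pow (by linarith) m
    have h2 : lam ^ m * (1 + m * (1 - lam)) ≤ lam ^ m * (1 + (1 - lam)) ^ m :=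
      mul_le_mul_of_nonneg_left hb (pow_nonneg h0.le m)
    have h3 : lam ^ m * (1 + (1 - lam)) ^ m = (1 - (1 - lam)^2) ^ m := by
      rw [← mul_pow]; ring_nf
    have h4 : (1 - (1 - lam)^2 : ℝ) ^ m ≤ 1 :=
      pow_le_one₀ (by nlinarith) (by nlinarith)
    linarith [h3 ▸ h2]
  have L2 : ∀ m : ℕ, 1 - (m:ℝ) * (1 - lam) ≤ lam ^ m := by
    intro m
    have hb : 1 + (m:ℝ) * (-(1 - lam)) ≤ (1 + (-(1 - lam))) ^ m :=
      one_add_mul_le_pow (by linarith) m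
    have : (1 + (-(1 - lam)) : ℝ) = lam := by ring
    rw [this] at hb; linarith
  -- positive denominator
  have hden : 0 < (1 - lam) * (kstar * (1 - lam) + N * lam) := by
    have hN1 : (1:ℝ) ≤ N := by exact_mod_cast hN
    have h2 : (0:ℝ) ≤ kstar * (1 - lam) := by positivity
    have h3 : (0:ℝ) < kstar * (1 - lam) + N * lam := by nlinarith
    exact mul_pos hν0 h3
  constructor
  · intro hδ
    have hnum : δ * (1 + ((N:ℝ) - kstar) * (1 - lam)) - lam ^ kstar ≤ 0 := by
      rcases le_or_gt (1 + ((N:ℝ) - kstar) * (1 - lam)) 0 with hc | hc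
      · nlinarith [pow_pos h0 kstar, mul_nonpos_of_nonneg_of_nonpos hδ0.le hc]
      · have hδc : δ * (1 + ((N:ℝ) - kstar) * (1 - lam))
            ≤ lam ^ N * (1 + ((N:ℝ) - kstar) * (1 - lam)) :=
          mul_le_mul_of_nonneg_right hδ hc.le
        rcases le_or_gt kstar N with hkN | hkN
        · set a := N - kstar with ha
          have hca : ((N:ℝ) - kstar) = (a:ℝ) := by
            rw [ha]; push_cast [hkN]; ring
          have hpow : lam ^ N = lam ^ kstar * lam ^ a := by
            rw [← pow_add]; congr 1; omega
          have := L1 a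
          have hk0 : (0:ℝ) ≤ lam ^ kstar := pow_nonneg h0.le kstar
          rw [hca] at hδc ⊢
          nlinarith [mul_le_mul_of_nonneg_left this hk0]
        · set a := kstar - N with ha
          have hca : ((N:ℝ) - kstar) = -(a:ℝ) := by
            rw [ha]; push_cast [hkN.le]; ring
          have hpow : lam ^ kstar = lam ^ N * lam ^ a := by
            rw [← pow_add]; congr 1; omega
          have := L2 a
          have hk0 : (0:ℝ) ≤ lam ^ N := pow_nonneg h0.le N
          rw [hca] at hδc ⊢
          nlinarith [mul_le_mul_of_nonneg_left this hk0]
    unfold zetadel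
    apply div_nonpos_of_nonpos_of_nonneg _ hden.le
    exact mul_nonpos_of_nonneg_of_nonpos h0.le hnum
  · intro hδ
    -- first: kstar ≤ N
    have hkN : kstar ≤ N := by
      by_contra hgt
      push_neg at hgt
      obtain ⟨m, hks⟩ : ∃ m, kstar = N + 1 + m := ⟨kstar - (N+1), by omega⟩
      subst hks
      have hc1 : ((N:ℝ) + 1 - (N + 1 + m : ℕ)) = -(m:ℝ) := by push_cast; ring
      have hc2 : (N + 1 + m) - 1 = N + m := by omega
      rw [hc1, hc2] at hk1
      have hp1 : lam ^ (N + 1 + m) = lam ^ N * (lam ^ m * lam) := by ring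
      have hp2 : lam ^ (N + m) = lam ^ N * lam ^ m := by rw [pow_add]
      rw [hp1, hp2] at hk1
      have hL := L1 m
      have hN0 : (0:ℝ) < lam ^ N := pow_pos h0 N
      have hm0 : (0:ℝ) ≤ lam ^ m := pow_nonneg h0.le m
      have hN1 : (1:ℝ) ≤ N := by exact_mod_cast hN
      -- f(kstar) = lam^N * lam^m * (N+1+m(1-lam)) ≤ (N+1) lam^N < (N+1) δ
      push_cast at hk1
      nlinarith [mul_le_mul_of_nonneg_left hL hN0.le,
        mul_nonneg (mul_nonneg hN0.le hm0) (mul_nonneg (Nat.cast_nonneg m) hν0.le)]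
    -- strict inequality at kstar + 1
    have hlt : ((N:ℝ) + 1 - (kstar+1 : ℕ)) * lam ^ (kstar+1)
        + ((kstar+1 : ℕ):ℝ) * lam ^ ((kstar+1) - 1) < ((N:ℝ) + 1) * δ := by
      by_contra h
      push_neg at h
      have := hk2 (kstar+1) h
      omega
    have hc2 : (kstar + 1) - 1 = kstar := by omega
    rw [hc2] at hlt
    obtain ⟨a, ha⟩ : ∃ a, N = kstar + a := ⟨N - kstar, by omega⟩
    have hca : ((N:ℝ) - kstar) = (a:ℝ) := by subst ha; push_cast; ring
    -- f(kstar+1) = lam^kstar * (N+1 - a ν)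
    have hfe : ((N:ℝ) + 1 - (kstar+1 : ℕ)) * lam ^ (kstar+1)
        + ((kstar+1 : ℕ):ℝ) * lam ^ kstar
        = lam ^ kstar * ((N:ℝ) + 1 - a * (1 - lam)) := by
      have h1 : ((N:ℝ) + 1 - (kstar+1 : ℕ)) = (a:ℝ) := by push_cast [hca]; linarith [hca]
      rw [h1, pow_succ]
      have h2 : ((kstar+1:ℕ):ℝ) = (N:ℝ) + 1 - a := by push_cast; linarith [hca]
      rw [h2]; ring
    rw [hfe] at hlt
    have hnum : 0 < δ * (1 + ((N:ℝ) - kstar) * (1 - lam)) - lam ^ kstar := by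
      rw [hca]
      have haN : (a:ℝ) ≤ N := by exact_mod_cast (by omega : a ≤ N)
      have hc : (0:ℝ) < 1 + a * (1 - lam) := by positivity
      have hkey : ((N:ℝ) + 1 - a * (1 - lam)) * (1 + a * (1 - lam)) ≥ (N:ℝ) + 1 := by
        have h1 : (a:ℝ) * (1 - lam) ≤ (N:ℝ) := by
          nlinarith [Nat.cast_nonneg (α := ℝ) a]
        nlinarith [mul_nonneg (mul_nonneg (Nat.cast_nonneg (α := ℝ) a) hν0.le)
          (sub_nonneg.mpr h1)]
      have hN1 : (0:ℝ) < (N:ℝ) + 1 := by positivity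
      have hstep := mul_lt_mul_of_pos_right hlt hc
      nlinarith [pow_nonneg h0.le kstar]
    unfold zetadel
    apply div_pos _ hden
    exact mul_pos h0 hnum
end

section
/- Fix 0 < ε, δ, λ < 1, F = 1 − ε, ν = 1 − λ, and let k_− = ⌊log_λ δ⌋. Then Ñ(ε, δ, λ, k_−) ≤ (log_λ δ)/(λε) − νk_−/λ, with equality if and only if log_λ δ is an integer, where Ñ(ε, δ, λ, k) = (kν²δF + λ^{k+1} + λδ(kν − 1))/(λνδε). -/
/-- `Ñ(ε, δ, λ, k)` with a real parameter `k`: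
`(kν²δF + λ^(k+1) + λδ(kν - 1))/(λνδε)` with `F = 1 - ε`, `ν = 1 - λ`. -/
noncomputable def NtildeR (ε δ lam k : ℝ) : ℝ :=
  (k * (1 - lam) ^ 2 * δ * (1 - ε) + lam ^ (k + 1) +
    lam * δ * (k * (1 - lam) - 1)) / (lam * (1 - lam) * δ * ε)

lemma aux_key (lam b : ℝ) (h0 : 0 < lam) (h1 : lam < 1) (hb0 : 0 ≤ b) (hb1 : b < 1) :
    lam ^ (1 - b) ≤ lam + (1 - lam) * b ∧
      (lam ^ (1 - b) = lam + (1 - lam) * b ↔ b = 0) := by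
  rcases eq_or_lt_of_le hb0 with h | h
  · subst_vars
    norm_num
  · have hlog : Real.log lam < 0 := Real.log_neg h0 h1
    have hconv := strictConvexOn_exp.2 (Set.mem_univ (Real.log lam)) (Set.mem_univ 0)
      (ne_of_lt hlog) (by linarith : (0:ℝ) < 1 - b) h (by ring)
    simp only [smul_eq_mul] at hconv
    rw [Real.exp_log h0, Real.exp_zero] at hconv
    have hrw : lam ^ (1 - b) = Real.exp ((1 - b) * Real.log lam + b * 0) := by
      rw [Real.rpow_def_of_pos h0]; ring_nf
    have hlt : lam ^ (1 - b) < lam + (1 - lam) * b := by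
      rw [hrw]; nlinarith [hconv]
    exact ⟨le_of_lt hlt, by constructor <;> intro hh <;> [linarith; linarith]⟩

/-- Lemma 18 of the paper: with `k₋ = ⌊log_λ δ⌋`,
`Ñ(ε, δ, λ, k₋) ≤ (log_λ δ)/(λε) - νk₋/λ`, with equality iff `log_λ δ` is an integer. -/
theorem stmt10 (ε δ lam : ℝ) (hε : ε ∈ Set.Ioo (0 : ℝ) 1) (hδ : δ ∈ Set.Ioo (0 : ℝ) 1)
    (hlam : lam ∈ Set.Ioo (0 : ℝ) 1) :
    NtildeR ε δ lam ((⌊Real.log δ / Real.log lam⌋ : ℤ) : ℝ)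
      ≤ (Real.log δ / Real.log lam) / (lam * ε)
        - (1 - lam) * ((⌊Real.log δ / Real.log lam⌋ : ℤ) : ℝ) / lam ∧
    (NtildeR ε δ lam ((⌊Real.log δ / Real.log lam⌋ : ℤ) : ℝ)
        = (Real.log δ / Real.log lam) / (lam * ε)
          - (1 - lam) * ((⌊Real.log δ / Real.log lam⌋ : ℤ) : ℝ) / lam
      ↔ ((⌊Real.log δ / Real.log lam⌋ : ℤ) : ℝ) = Real.log δ / Real.log lam) := by
  obtain ⟨hε0, hε1⟩ := hε
  obtain ⟨hδ0, hδ1⟩ := hδ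
  obtain ⟨hl0, hl1⟩ := hlam
  set L : ℝ := Real.log δ / Real.log lam with hL
  set k : ℝ := ((⌊L⌋ : ℤ) : ℝ) with hk
  set b : ℝ := L - k with hbdef
  have hb0 : 0 ≤ b := by
    simp only [hbdef, hk]; linarith [Int.floor_le L]
  have hb1 : b < 1 := by
    simp only [hbdef, hk]; linarith [Int.lt_floor_add_one L]
  have hlog : Real.log lam < 0 := Real.log_neg hl0 hl1
  have hlogne : Real.log lam ≠ 0 := ne_of_lt hlog
  have hlamL : lam ^ L = δ := by
    rw [Real.rpow_def_of_pos hl0, hL, mul_div_cancel₀ _ hlogne, Real.exp_log hδ0]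
  have hpow : lam ^ (k + 1) = δ * lam ^ (1 - b) := by
    have : k + 1 = L + (1 - b) := by rw [hbdef]; ring
    rw [this, Real.rpow_add hl0, hlamL]
  have hkey := aux_key lam b hl0 hl1 hb0 hb1
  have hν : 0 < 1 - lam := by linarith
  have hD : 0 < lam * (1 - lam) * δ * ε := by positivity
  have hdiff : L / (lam * ε) - (1 - lam) * k / lam - NtildeR ε δ lam k
      = δ * ((lam + (1 - lam) * b) - lam ^ (1 - b)) / (lam * (1 - lam) * δ * ε) := by
    rw [NtildeR, hpow]
    have hkb : k = L - b := by rw [hbdef]; ring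
    rw [hkb]
    field_simp
    ring
  have hnum : 0 ≤ δ * ((lam + (1 - lam) * b) - lam ^ (1 - b)) := by
    have := hkey.1; nlinarith
  constructor
  · have : 0 ≤ L / (lam * ε) - (1 - lam) * k / lam - NtildeR ε δ lam k := by
      rw [hdiff]; exact div_nonneg hnum (le_of_lt hD)
    linarith
  · constructor
    · intro heq
      have h0 : δ * ((lam + (1 - lam) * b) - lam ^ (1 - b)) / (lam * (1 - lam) * δ * ε) = 0 := by
        rw [← hdiff]; linarith
      have h1 : δ * ((lam + (1 - lam) * b) - lam ^ (1 - b)) = 0 := by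
        rcases div_eq_zero_iff.mp h0 with h | h
        · exact h
        · exact absurd h (ne_of_gt hD)
      have h2 : lam ^ (1 - b) = lam + (1 - lam) * b := by nlinarith
      have hb : b = 0 := hkey.2.mp h2
      rw [hbdef] at hb; linarith
    · intro heq
      have hb : b = 0 := by rw [hbdef, ← heq]; ring
      have h2 : lam ^ (1 - b) = lam + (1 - lam) * b := hkey.2.mpr hb
      have : δ * ((lam + (1 - lam) * b) - lam ^ (1 - b)) = 0 := by rw [h2]; ring
      have := hdiff
      rw [‹δ * ((lam + (1 - lam) * b) - lam ^ (1 - b)) = 0›] at this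
      simp at this
      linarith
end

section
/- Let 1 > x_1 ≥ x_2 ≥ … ≥ x_m > 0 and c ≤ 0. Then the maximum of ∑_j a_j/x_j over nonnegative reals a_1, …, a_m subject to ∑_j a_j ln x_j = c equals c/(y ln y), where y = x_1 if x_1 ln(1/x_1) ≤ x_m ln(1/x_m) and y = x_m otherwise. -/
/-- Lemma (Constrained maximization): for `1 > x_1 ≥ … ≥ x_m > 0` and `c ≤ 0`, the maximum
of `∑ a_j/x_j` over nonnegative `a` with `∑ a_j ln x_j = c` equals `c/(y ln y)` where
`y = x_1` if `x_1 ln(1/x_1) ≤ x_m ln(1/x_m)` and `y = x_m` otherwise. -/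
theorem stmt12 (m : ℕ) (x : Fin (m + 1) → ℝ)
    (hx0 : ∀ i, 0 < x i) (hx1 : ∀ i, x i < 1)
    (hmono : ∀ i j : Fin (m + 1), i ≤ j → x j ≤ x i)
    (c : ℝ) (hc : c ≤ 0) (y : ℝ)
    (hy : y = if x 0 * Real.log (1 / x 0)
        ≤ x (Fin.last m) * Real.log (1 / x (Fin.last m))
      then x 0 else x (Fin.last m)) :
    IsGreatest {t : ℝ | ∃ a : Fin (m + 1) → ℝ, (∀ j, 0 ≤ a j) ∧
        (∑ j, a j * Real.log (x j)) = c ∧ t = ∑ j, a j / x j}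
      (c / (y * Real.log y)) := by
  set L := Fin.last m with hL
  have hneg : ∀ t : ℝ, t * Real.log (1 / t) = Real.negMulLog t := by
    intro t
    rw [one_div, Real.log_inv, Real.negMulLog]
    ring
  have hy0 : 0 < y := by
    rw [hy]; split_ifs; exacts [hx0 0, hx0 L]
  have hy1 : y < 1 := by
    rw [hy]; split_ifs; exacts [hx1 0, hx1 L]
  have hlogy : Real.log y < 0 := Real.log_neg hy0 hy1
  have hD : y * Real.log y < 0 := mul_neg_of_pos_of_neg hy0 hlogy
  have hmin : ∀ j, x j * Real.log (x j) ≤ y * Real.log y := by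
    intro j
    have h1 : x L ≤ x j := hmono j L (Fin.le_last j)
    have h2 : x j ≤ x 0 := hmono 0 j (Fin.zero_le j)
    have hcon : ConcaveOn ℝ (Set.Ici 0) Real.negMulLog :=
      Real.strictConcaveOn_negMulLog.concaveOn
    have hseg : x j ∈ segment ℝ (x L) (x 0) := by
      rw [segment_eq_Icc (h1.trans h2)]; exact ⟨h1, h2⟩
    have hmm := hcon.ge_on_segment (Set.mem_Ici.2 (hx0 L).le)
      (Set.mem_Ici.2 (hx0 0).le) hseg
    have hy' : Real.negMulLog y ≤ Real.negMulLog (x j) := by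
      refine le_trans ?_ hmm
      rw [hy]
      split_ifs with h
      · rw [hneg, hneg] at h
        exact le_min h le_rfl
      · rw [hneg, hneg] at h
        exact le_min le_rfl (not_le.1 h).le
    have : -(y * Real.log y) ≤ -(x j * Real.log (x j)) := by
      simpa [Real.negMulLog, neg_mul] using hy'
    linarith
  constructor
  · -- membership
    obtain ⟨i₀, hi⟩ : ∃ i₀, y = x i₀ := by
      rw [hy]; split_ifs; exacts [⟨0, rfl⟩, ⟨L, rfl⟩]
    have hlogx : Real.log (x i₀) < 0 := by rw [← hi]; exact hlogy
    refine ⟨fun j => if j = i₀ then c / Real.log (x i₀) else 0, ?_, ?_, ?_⟩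
    · intro j
      dsimp only
      split_ifs
      · simpa [neg_div_neg_eq] using div_nonneg (neg_nonneg.2 hc) (neg_nonneg.2 hlogx.le)
      · exact le_rfl
    · rw [Finset.sum_eq_single i₀]
      · simp [div_mul_cancel₀ c hlogx.ne]
      · intro b _ hb; simp [hb]
      · simp
    · rw [Finset.sum_eq_single i₀]
      · dsimp only
        rw [if_pos rfl, ← hi, eq_comm, div_div, mul_comm (Real.log y) y]
      · intro b _ hb; simp [hb]
      · simp
  · -- upper bound
    rintro t ⟨a, ha0, hac, rfl⟩
    have key : ∀ j, a j / x j ≤ a j * Real.log (x j) / (y * Real.log y) := by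
      intro j
      have hxj := hx0 j
      have h1 : (1 : ℝ) / x j ≤ Real.log (x j) / (y * Real.log y) := by
        rw [le_div_iff_of_neg hD, one_div, inv_mul_eq_div, le_div_iff₀ hxj]
        rw [mul_comm]; exact hmin j
      calc a j / x j = a j * (1 / x j) := by ring
        _ ≤ a j * (Real.log (x j) / (y * Real.log y)) :=
            mul_le_mul_of_nonneg_left h1 (ha0 j)
        _ = a j * Real.log (x j) / (y * Real.log y) := by ring
    calc ∑ j, a j / x j ≤ ∑ j, a j * Real.log (x j) / (y * Real.log y) :=
          Finset.sum_le_sum fun j _ => key j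
      _ = (∑ j, a j * Real.log (x j)) / (y * Real.log y) := by
          rw [← Finset.sum_div]
      _ = c / (y * Real.log y) := by rw [hac]
end

section
/- For 0 < ν ≤ 1, the inequality ln(e − eν + ν²) ≤ 1 − ν holds; consequently, with p_0 = ν/e and β_{p_0} = 1 − ν + ν²/e, one has β_{p_0} ln(1/β_{p_0}) ≥ (1 − ν + ν²/e)ν. -/
/-- Degree-3 Taylor lower bound for `exp` on `[-1, 1]`. -/
lemma exp_taylor_lb (x : ℝ) (hx : |x| ≤ 1) :
    1 + x + x ^ 2 / 2 + x ^ 3 / 6 - |x| ^ 4 * (5 / 96) ≤ Real.exp x := by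
  have h := Real.exp_bound hx (n := 4) (by norm_num)
  have hs : ∑ i ∈ Finset.range 4, x ^ i / (Nat.factorial i : ℝ)
      = 1 + x + x ^ 2 / 2 + x ^ 3 / 6 := by
    simp [Finset.sum_range_succ, Nat.factorial]
  rw [hs] at h
  have h' := (abs_le.1 h).1
  norm_num [Nat.factorial] at h'
  linarith

/-- Eq. (A44) of the paper: for `0 < ν ≤ 1`, `ln(e - eν + ν²) ≤ 1 - ν`; consequently,
with `p₀ = ν/e` and `β_{p₀} = 1 - ν + ν²/e`, one has `β_{p₀} ln(1/β_{p₀}) ≥ β_{p₀} ν`. -/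
theorem stmt15 (ν : ℝ) (h0 : 0 < ν) (h1 : ν ≤ 1) :
    Real.log (Real.exp 1 - Real.exp 1 * ν + ν ^ 2) ≤ 1 - ν ∧
    (1 - ν + ν ^ 2 / Real.exp 1) * ν
      ≤ (1 - ν + ν ^ 2 / Real.exp 1) * Real.log (1 / (1 - ν + ν ^ 2 / Real.exp 1)) := by
  have he1 : (2.7182818283 : ℝ) < Real.exp 1 := Real.exp_one_gt_d9
  have he2 : Real.exp 1 < 2.7182818286 := Real.exp_one_lt_d9
  have hpos : 0 < Real.exp 1 - Real.exp 1 * ν + ν ^ 2 := by nlinarith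
  have key : Real.exp 1 - Real.exp 1 * ν + ν ^ 2 ≤ Real.exp (1 - ν) := by
    rcases le_or_gt ν (1 / 2) with hc | hc
    · -- ν small: exp(1-ν) = e * exp(-ν), Taylor at 0 for exp(-ν)
      have habs : |(-ν)| ≤ 1 := by rw [abs_neg, abs_of_pos h0]; exact h1
      have ht := exp_taylor_lb (-ν) habs
      rw [abs_neg, abs_of_pos h0] at ht
      have hsplit : Real.exp (1 - ν) = Real.exp 1 * Real.exp (-ν) := by
        rw [← Real.exp_add]; ring_nf
      rw [hsplit]
      have hsq : ν ^ 2 ≤ 1 / 4 := by nlinarith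
      have hν3 : ν ^ 3 ≤ ν ^ 2 * (1 / 2) := by nlinarith [sq_nonneg ν]
      have hν4 : ν ^ 4 ≤ ν ^ 2 * (1 / 4) := by nlinarith [sq_nonneg ν, sq_nonneg (ν^2)]
      have hq : ν ^ 2 * (155 / 384) ≤ ν ^ 2 / 2 - ν ^ 3 / 6 - 5 * ν ^ 4 / 96 := by
        linarith
      nlinarith [sq_nonneg ν,
        mul_le_mul_of_nonneg_left ht (Real.exp_pos 1).le,
        mul_le_mul_of_nonneg_left hq (Real.exp_pos 1).le,
        mul_le_mul_of_nonneg_right he1.le (sq_nonneg ν)]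
    · -- ν large: Taylor at 0 for exp(1-ν) directly, t = 1-ν ∈ [0, 1/2]
      set t := 1 - ν with htdef
      have ht0 : 0 ≤ t := by simp [htdef]; linarith
      have ht2 : t ≤ 1 / 2 := by simp [htdef]; linarith
      have habs : |t| ≤ 1 := by rw [abs_of_nonneg ht0]; linarith
      have hb := exp_taylor_lb t habs
      rw [abs_of_nonneg ht0] at hb
      have hν : ν = 1 - t := by simp [htdef]
      rw [hν]
      nlinarith [sq_nonneg t, mul_nonneg ht0 ht0,
        mul_nonneg (mul_nonneg ht0 ht0) ht0,
        mul_nonneg (mul_nonneg (mul_nonneg ht0 ht0) ht0) ht0,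
        mul_nonneg (sub_nonneg.2 ht2) ht0,
        mul_nonneg (mul_nonneg (sub_nonneg.2 ht2) ht0) ht0,
        mul_nonneg (mul_nonneg (mul_nonneg (sub_nonneg.2 ht2) ht0) ht0) ht0]
  have h44 : Real.log (Real.exp 1 - Real.exp 1 * ν + ν ^ 2) ≤ 1 - ν := by
    calc Real.log (Real.exp 1 - Real.exp 1 * ν + ν ^ 2)
        ≤ Real.log (Real.exp (1 - ν)) := Real.log_le_log hpos key
      _ = 1 - ν := Real.log_exp _
  refine ⟨h44, ?_⟩
  have hepos := Real.exp_pos 1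
  have hβ : 0 < 1 - ν + ν ^ 2 / Real.exp 1 := by
    have : 0 < ν ^ 2 / Real.exp 1 := by positivity
    linarith
  have heq : Real.exp 1 - Real.exp 1 * ν + ν ^ 2
      = Real.exp 1 * (1 - ν + ν ^ 2 / Real.exp 1) := by
    field_simp
  rw [heq, Real.log_mul (ne_of_gt hepos) (ne_of_gt hβ), Real.log_exp] at h44
  have hlog : ν ≤ Real.log (1 / (1 - ν + ν ^ 2 / Real.exp 1)) := by
    rw [one_div, Real.log_inv]; linarith
  exact mul_le_mul_of_nonneg_left hlog hβ.le
end
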